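/- arXiv:1712.03807 — 2 statements merged into one kernel-verified Lean document; each statement's English description precedes it below -/
import Mathlib

section
/- Let J ⊆ ℝ be an open interval and let B̃ : J → ℝ^{d×d} and ã : J → ℝ^{d×d} be continuous. Suppose L̃ : J → ℝ^{m×d} is differentiable with L̃′(t) = −L̃(t) B̃(t), suppose M̃† : J → ℝ^{m×m} is differentiable with (M̃†)′(t) = −L̃(t) ã(t) L̃(t)ᵀ, and suppose for every t ∈ J both M̃†(t) and H̃(t) := L̃(t)ᵀ M̃†(t)⁻¹ L̃(t) are invertible; write M̃(t) := M̃†(t)⁻¹ and H̃†(t) := H̃(t)⁻¹. Then the map t ↦ H̃†(t) L̃(t)ᵀ M̃(t) is differentiable on J with derivative B̃(t) H̃†(t) L̃(t)ᵀ M̃(t) at every t ∈ J. -/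
/-!
Write `H = Lᵀ M⁻¹ L`. Since `(X⁻¹)' = -X⁻¹ X' X⁻¹`, the hypotheses `L' = -L B` and `M' = -L a Lᵀ`
give `H' = -Bᵀ H + H a H - H B` and hence `(H⁻¹)' = H⁻¹ Bᵀ - a + B H⁻¹`. In the product rule for
`H⁻¹ Lᵀ M⁻¹` the two `Bᵀ`-terms cancel, and `H⁻¹ Lᵀ M⁻¹ L a Lᵀ M⁻¹ = a Lᵀ M⁻¹` cancels `-a Lᵀ M⁻¹`,
leaving `B H⁻¹ Lᵀ M⁻¹`.
-/

open Matrix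

-- a submultiplicative norm, so that the derivative of `Ring.inverse` applies to square matrices
attribute [local instance] Matrix.linftyOpNormedAddCommGroup Matrix.linftyOpNormedSpace
  Matrix.linftyOpNormedRing Matrix.linftyOpNormedAlgebra

section Calculus

variable {𝕜 : Type*} [NontriviallyNormedField 𝕜] {l m n : Type*} [Fintype l] [Fintype m]
  [Fintype n] {t : 𝕜}

theorem Matrix.hasDerivAt_iff [CompleteSpace 𝕜] {f : 𝕜 → Matrix m n 𝕜} {f' : Matrix m n 𝕜} :
    HasDerivAt f f' t ↔ ∀ i j, HasDerivAt (fun s => f s i j) (f' i j) t := by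
  let e : Matrix m n 𝕜 ≃L[𝕜] (m → n → 𝕜) :=
    (Matrix.ofLinearEquiv 𝕜).symm.toContinuousLinearEquiv
  have hcomp : HasDerivAt f f' t ↔ HasDerivAt (fun s => e (f s)) (e f') t :=
    ⟨fun h => e.hasFDerivAt.comp_hasDerivAt t h, fun h => by
      have h' := e.symm.hasFDerivAt.comp_hasDerivAt t h
      simp only [Function.comp_def] at h'
      exact h'⟩
  simp_rw [hcomp, hasDerivAt_pi]
  exact Iff.rfl

variable [CompleteSpace 𝕜]

theorem HasDerivAt.matrix_mul {f : 𝕜 → Matrix l m 𝕜} {g : 𝕜 → Matrix m n 𝕜}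
    {f' : Matrix l m 𝕜} {g' : Matrix m n 𝕜} (hf : HasDerivAt f f' t) (hg : HasDerivAt g g' t) :
    HasDerivAt (fun s => f s * g s) (f' * g t + f t * g') t := by
  rw [Matrix.hasDerivAt_iff] at hf hg ⊢
  intro i j
  simpa only [mul_apply, Matrix.add_apply, Finset.sum_add_distrib] using
    HasDerivAt.fun_sum fun k _ => (hf i k).fun_mul (hg k j)

theorem HasDerivAt.matrix_transpose {f : 𝕜 → Matrix m n 𝕜} {f' : Matrix m n 𝕜}
    (hf : HasDerivAt f f' t) : HasDerivAt (fun s => (f s)ᵀ) f'ᵀ t :=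
  Matrix.hasDerivAt_iff.mpr fun i j => Matrix.hasDerivAt_iff.mp hf j i

theorem HasDerivAt.matrix_inv [DecidableEq n] {f : 𝕜 → Matrix n n 𝕜} {f' : Matrix n n 𝕜}
    (hf : HasDerivAt f f' t) (hu : IsUnit (f t)) :
    HasDerivAt (fun s => (f s)⁻¹) (-((f t)⁻¹ * f' * (f t)⁻¹)) t := by
  -- instance search only finds completeness for the product uniformity on `Matrix`
  have : @CompleteSpace (Matrix n n 𝕜) PseudoMetricSpace.toUniformSpace :=
    FiniteDimensional.complete 𝕜 _
  obtain ⟨u, hu⟩ := hu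
  have h := (hasFDerivAt_ringInverse (𝕜 := 𝕜) u).comp_hasDerivAt_of_eq t hf hu
  simp only [Function.comp_def, ← nonsing_inv_eq_ringInverse, _root_.neg_apply,
    ContinuousLinearMap.mulLeftRight_apply, coe_units_inv, hu] at h
  exact h

end Calculus

section Smoothing

variable {𝕜 : Type*} [NontriviallyNormedField 𝕜] [CompleteSpace 𝕜] {m n : Type*} [Fintype m]
  [Fintype n] [DecidableEq m] {L : 𝕜 → Matrix m n 𝕜} {M : 𝕜 → Matrix m m 𝕜}
  {B A : Matrix n n 𝕜} {t : 𝕜}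

theorem hasDerivAt_transpose_mul_inv_mul (hL : HasDerivAt L (-(L t * B)) t)
    (hM : HasDerivAt M (-(L t * A * (L t)ᵀ)) t) (hMu : IsUnit (M t)) :
    HasDerivAt (fun s => (L s)ᵀ * (M s)⁻¹ * L s)
      (-(Bᵀ * ((L t)ᵀ * (M t)⁻¹ * L t)) + (L t)ᵀ * (M t)⁻¹ * L t * A * ((L t)ᵀ * (M t)⁻¹ * L t)
        - (L t)ᵀ * (M t)⁻¹ * L t * B) t := by
  have hLT := hL.matrix_transpose
  have hMinv := hM.matrix_inv hMu
  convert (hLT.matrix_mul hMinv).matrix_mul hL using 1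
  simp only [transpose_neg, transpose_mul, Matrix.mul_assoc, Matrix.add_mul, Matrix.neg_mul,
    Matrix.mul_neg, neg_neg]
  abel

theorem hasDerivAt_inv_transpose_mul_inv_mul [DecidableEq n] (hL : HasDerivAt L (-(L t * B)) t)
    (hM : HasDerivAt M (-(L t * A * (L t)ᵀ)) t) (hMu : IsUnit (M t))
    (hHu : IsUnit ((L t)ᵀ * (M t)⁻¹ * L t)) :
    HasDerivAt (fun s => ((L s)ᵀ * (M s)⁻¹ * L s)⁻¹)
      (((L t)ᵀ * (M t)⁻¹ * L t)⁻¹ * Bᵀ - A + B * ((L t)ᵀ * (M t)⁻¹ * L t)⁻¹) t := by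
  convert (hasDerivAt_transpose_mul_inv_mul hL hM hMu).matrix_inv hHu using 1
  have hdet := (isUnit_iff_isUnit_det _).mp hHu
  generalize (L t)ᵀ * (M t)⁻¹ * L t = H at hdet ⊢
  simp only [Matrix.mul_add, Matrix.mul_sub, Matrix.mul_neg, Matrix.add_mul, Matrix.sub_mul,
    Matrix.neg_mul, Matrix.mul_assoc, mul_nonsing_inv _ hdet, nonsing_inv_mul_cancel_left _ _ hdet,
    Matrix.mul_one]
  abel

theorem hasDerivAt_inv_transpose_mul_inv_mul_mul_transpose_mul_inv [DecidableEq n]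
    (hL : HasDerivAt L (-(L t * B)) t)
    (hM : HasDerivAt M (-(L t * A * (L t)ᵀ)) t) (hMu : IsUnit (M t))
    (hHu : IsUnit ((L t)ᵀ * (M t)⁻¹ * L t)) :
    HasDerivAt (fun s => ((L s)ᵀ * (M s)⁻¹ * L s)⁻¹ * (L s)ᵀ * (M s)⁻¹)
      (B * (((L t)ᵀ * (M t)⁻¹ * L t)⁻¹ * (L t)ᵀ * (M t)⁻¹)) t := by
  have hLT := hL.matrix_transpose
  have hMinv := hM.matrix_inv hMu
  convert ((hasDerivAt_inv_transpose_mul_inv_mul hL hM hMu hHu).matrix_mul hLT).matrix_mul hMinv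
    using 1
  have hcancel : ∀ X : Matrix n m 𝕜,
      ((L t)ᵀ * (M t)⁻¹ * L t)⁻¹ * ((L t)ᵀ * ((M t)⁻¹ * (L t * X))) = X := fun X => by
    simpa only [Matrix.mul_assoc] using
      nonsing_inv_mul_cancel_left _ X ((isUnit_iff_isUnit_det _).mp hHu)
  generalize ((L t)ᵀ * (M t)⁻¹ * L t)⁻¹ = Hinv at hcancel ⊢
  simp only [transpose_neg, transpose_mul, Matrix.add_mul, Matrix.sub_mul, Matrix.neg_mul,
    Matrix.mul_neg, Matrix.mul_assoc, hcancel, neg_neg]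
  abel

end Smoothing

theorem deriv_Hdagger_Lt_M_general {d m : ℕ} (a b : ℝ)
    (Btil atil : ℝ → Matrix (Fin d) (Fin d) ℝ)
    (Ltil : ℝ → Matrix (Fin m) (Fin d) ℝ)
    (hLtil : ∀ t ∈ Set.Ioo a b, ∀ i j,
      HasDerivAt (fun s => Ltil s i j) ((-(Ltil t * Btil t)) i j) t)
    (Mdag : ℝ → Matrix (Fin m) (Fin m) ℝ)
    (hMdag : ∀ t ∈ Set.Ioo a b, ∀ i j,
      HasDerivAt (fun s => Mdag s i j) ((-(Ltil t * atil t * (Ltil t)ᵀ)) i j) t)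
    (hMinv : ∀ t ∈ Set.Ioo a b, IsUnit (Mdag t))
    (hHinv : ∀ t ∈ Set.Ioo a b, IsUnit ((Ltil t)ᵀ * (Mdag t)⁻¹ * Ltil t)) :
    ∀ t ∈ Set.Ioo a b, ∀ i j,
      HasDerivAt
        (fun s => (((Ltil s)ᵀ * (Mdag s)⁻¹ * Ltil s)⁻¹ * (Ltil s)ᵀ * (Mdag s)⁻¹) i j)
        ((Btil t *
          (((Ltil t)ᵀ * (Mdag t)⁻¹ * Ltil t)⁻¹ * (Ltil t)ᵀ * (Mdag t)⁻¹)) i j) t := by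
  intro t ht
  have hL := Matrix.hasDerivAt_iff.mpr (hLtil t ht)
  have hM := Matrix.hasDerivAt_iff.mpr (hMdag t ht)
  exact Matrix.hasDerivAt_iff.mp <|
    hasDerivAt_inv_transpose_mul_inv_mul_mul_transpose_mul_inv hL hM (hMinv t ht) (hHinv t ht)

theorem deriv_Hdagger_Lt_M {d m : ℕ} (a b : ℝ)
    (Btil atil : ℝ → Matrix (Fin d) (Fin d) ℝ)
    (hB : ContinuousOn Btil (Set.Ioo a b)) (ha : ContinuousOn atil (Set.Ioo a b))
    (Ltil : ℝ → Matrix (Fin m) (Fin d) ℝ)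
    (hLtil : ∀ t ∈ Set.Ioo a b, ∀ i j,
      HasDerivAt (fun s => Ltil s i j) ((-(Ltil t * Btil t)) i j) t)
    (Mdag : ℝ → Matrix (Fin m) (Fin m) ℝ)
    (hMdag : ∀ t ∈ Set.Ioo a b, ∀ i j,
      HasDerivAt (fun s => Mdag s i j) ((-(Ltil t * atil t * (Ltil t)ᵀ)) i j) t)
    (hMinv : ∀ t ∈ Set.Ioo a b, IsUnit (Mdag t))
    (hHinv : ∀ t ∈ Set.Ioo a b, IsUnit ((Ltil t)ᵀ * (Mdag t)⁻¹ * Ltil t)) :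
    ∀ t ∈ Set.Ioo a b, ∀ i j,
      HasDerivAt
        (fun s => (((Ltil s)ᵀ * (Mdag s)⁻¹ * Ltil s)⁻¹ * (Ltil s)ᵀ * (Mdag s)⁻¹) i j)
        ((Btil t *
          (((Ltil t)ᵀ * (Mdag t)⁻¹ * Ltil t)⁻¹ * (Ltil t)ᵀ * (Mdag t)⁻¹)) i j) t :=
  deriv_Hdagger_Lt_M_general a b Btil atil Ltil hLtil Mdag hMdag hMinv hHinv
end

section
/- Let J ⊆ ℝ be an open interval and let B̃ : J → ℝ^{d×d}, ã : J → ℝ^{d×d} and β̃ : J → ℝ^d be continuous. Suppose L̃ : J → ℝ^{m×d} is differentiable with L̃′(t) = −L̃(t) B̃(t), suppose M̃† : J → ℝ^{m×m} is differentiable with (M̃†)′(t) = −L̃(t) ã(t) L̃(t)ᵀ, suppose μ : J → ℝ^m is differentiable with μ′(t) = −L̃(t) β̃(t), and suppose for every t ∈ J both M̃†(t) and H̃(t) := L̃(t)ᵀ M̃†(t)⁻¹ L̃(t) are invertible; write M̃(t) := M̃†(t)⁻¹ and H̃†(t) := H̃(t)⁻¹. Fix a vector x_obs ∈ ℝ^m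 and define ν(t) := H̃†(t) L̃(t)ᵀ M̃(t) (x_obs − μ(t)). Then ν is differentiable on J and satisfies ν′(t) = B̃(t) ν(t) + β̃(t) for every t ∈ J. -/
/-! With `M = (M̃†)⁻¹`, `H = L̃ᵀ M L̃` and the weighted left inverse `G = H⁻¹ L̃ᵀ M` of `L̃`, we have
`ν = G (x_obs - μ)`. The product and inverse rules give successively `M' = M L̃ ã L̃ᵀ M`,
`H' = H ã H - B̃ᵀ H - H B̃`, `(H⁻¹)' = B̃ H⁻¹ + H⁻¹ B̃ᵀ - ã` and finally `G' = B̃ G`; all the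
terms involving `ã` cancel. Since `G L̃ = 1`, this yields
`ν' = B̃ G (x_obs - μ) + G L̃ β̃ = B̃ ν + β̃`. -/

open Matrix

section EntrywiseDeriv

variable {l m n : Type*}

def HasEntrywiseDerivAt (A : ℝ → Matrix m n ℝ) (A' : Matrix m n ℝ) (t : ℝ) : Prop :=
  ∀ i j, HasDerivAt (fun s => A s i j) (A' i j) t

theorem HasEntrywiseDerivAt.congr_deriv {A : ℝ → Matrix l m ℝ} {A' B' : Matrix l m ℝ} {t : ℝ}
    (hA : HasEntrywiseDerivAt A A' t) (h : A' = B') : HasEntrywiseDerivAt A B' t :=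
  h ▸ hA

theorem HasEntrywiseDerivAt.transpose {A : ℝ → Matrix l m ℝ} {A' : Matrix l m ℝ} {t : ℝ}
    (hA : HasEntrywiseDerivAt A A' t) : HasEntrywiseDerivAt (fun s => (A s)ᵀ) A'ᵀ t :=
  fun i j => hA j i

theorem HasEntrywiseDerivAt.mul [Fintype m] {A : ℝ → Matrix l m ℝ} {B : ℝ → Matrix m n ℝ}
    {A' : Matrix l m ℝ} {B' : Matrix m n ℝ} {t : ℝ}
    (hA : HasEntrywiseDerivAt A A' t) (hB : HasEntrywiseDerivAt B B' t) :
    HasEntrywiseDerivAt (fun s => A s * B s) (A' * B t + A t * B') t := by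
  intro i j
  simpa only [mul_apply, Matrix.add_apply, Pi.mul_apply, Finset.sum_add_distrib] using
    HasDerivAt.fun_sum (u := Finset.univ) fun k _ => (hA i k).mul (hB k j)

theorem HasEntrywiseDerivAt.mulVec [Fintype m] {A : ℝ → Matrix l m ℝ} {v : ℝ → m → ℝ}
    {A' : Matrix l m ℝ} {v' : m → ℝ} {t : ℝ}
    (hA : HasEntrywiseDerivAt A A' t) (hv : HasDerivAt v v' t) :
    HasDerivAt (fun s => A s *ᵥ v s) (A' *ᵥ v t + A t *ᵥ v') t := by
  refine hasDerivAt_pi.2 fun i => ?_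
  simpa only [Matrix.mulVec, dotProduct, Pi.add_apply, Pi.mul_apply, Finset.sum_add_distrib] using
    HasDerivAt.fun_sum (u := Finset.univ) fun k _ => (hA i k).mul (hasDerivAt_pi.1 hv k)

variable [Fintype n] [DecidableEq n]

theorem differentiableAt_det_of_entrywise {A : ℝ → Matrix n n ℝ} {t : ℝ}
    (hA : ∀ i j, DifferentiableAt ℝ (fun s => A s i j) t) :
    DifferentiableAt ℝ (fun s => (A s).det) t := by
  simp only [det_apply, Units.smul_def, zsmul_eq_mul]
  exact DifferentiableAt.fun_sum fun σ _ =>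
    (DifferentiableAt.fun_finsetProd fun i _ => hA (σ i) i).const_mul _

theorem differentiableAt_inv_apply_of_entrywise {A : ℝ → Matrix n n ℝ} {t : ℝ}
    (hA : ∀ i j, DifferentiableAt ℝ (fun s => A s i j) t) (hdet : (A t).det ≠ 0) (i j : n) :
    DifferentiableAt ℝ (fun s => (A s)⁻¹ i j) t := by
  simp only [inv_def, Ring.inverse_eq_inv, Matrix.smul_apply, smul_eq_mul]
  refine ((differentiableAt_det_of_entrywise hA).inv hdet).mul ?_
  simp only [adjugate_apply]
  refine differentiableAt_det_of_entrywise fun k l => ?_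
  by_cases hk : k = j
  · simp only [hk, updateRow_self]
    exact differentiableAt_const _
  · simpa only [updateRow_ne hk] using hA k l

/-- Differentiability of `A⁻¹` comes from Cramer's rule; its derivative is then read off by
differentiating `A * A⁻¹ = 1`. -/
theorem HasEntrywiseDerivAt.inv {A : ℝ → Matrix n n ℝ} {A' : Matrix n n ℝ} {t : ℝ}
    (hA : HasEntrywiseDerivAt A A' t) (hu : IsUnit (A t)) :
    HasEntrywiseDerivAt (fun s => (A s)⁻¹) (-((A t)⁻¹ * A' * (A t)⁻¹)) t := by
  have hAd : ∀ i j, DifferentiableAt ℝ (fun s => A s i j) t :=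
    fun i j => (hA i j).differentiableAt
  have hdet : IsUnit (A t).det := (isUnit_iff_isUnit_det _).mp hu
  set W : Matrix n n ℝ := of fun i j => deriv (fun s => (A s)⁻¹ i j) t
  have hW : HasEntrywiseDerivAt (fun s => (A s)⁻¹) W t := fun i j =>
    (differentiableAt_inv_apply_of_entrywise hAd hdet.ne_zero i j).hasDerivAt
  have hone : ∀ᶠ s in nhds t, A s * (A s)⁻¹ = 1 := by
    filter_upwards [(differentiableAt_det_of_entrywise hAd).continuousAt.eventually_ne
      hdet.ne_zero] with s hs
    exact mul_nonsing_inv _ (isUnit_iff_ne_zero.mpr hs)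
  have hzero : A' * (A t)⁻¹ + A t * W = 0 := by
    ext i j
    refine ((hA.mul hW) i j).unique
      ((hasDerivAt_const t ((1 : Matrix n n ℝ) i j)).congr_of_eventuallyEq ?_)
    filter_upwards [hone] with s hs
    rw [hs]
  have hW_eq : W = -((A t)⁻¹ * A' * (A t)⁻¹) := by
    calc W = (A t)⁻¹ * (A t * W) := by rw [← Matrix.mul_assoc, nonsing_inv_mul _ hdet, one_mul]
      _ = -((A t)⁻¹ * A' * (A t)⁻¹) := by
        rw [eq_neg_of_add_eq_zero_right hzero, Matrix.mul_neg, Matrix.mul_assoc]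
  exact hW_eq ▸ hW

end EntrywiseDeriv

noncomputable def weightedLeftInverse {R m n : Type*} [CommRing R] [Fintype m] [Fintype n]
    [DecidableEq n] (L : Matrix m n R) (W : Matrix m m R) : Matrix n m R :=
  (Lᵀ * W * L)⁻¹ * Lᵀ * W

theorem weightedLeftInverse_mul_self {R m n : Type*} [CommRing R] [Fintype m] [Fintype n]
    [DecidableEq n] {L : Matrix m n R} {W : Matrix m m R} (h : IsUnit (Lᵀ * W * L)) :
    weightedLeftInverse L W * L = 1 := by
  rw [weightedLeftInverse, Matrix.mul_assoc _ W, Matrix.mul_assoc _ _ (W * L),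
    ← Matrix.mul_assoc Lᵀ]
  exact nonsing_inv_mul _ ((isUnit_iff_isUnit_det _).mp h)

theorem hasEntrywiseDerivAt_weightedLeftInverse {m n : Type*} [Fintype m] [Fintype n]
    [DecidableEq m] [DecidableEq n] {L : ℝ → Matrix m n ℝ} {Mdag : ℝ → Matrix m m ℝ}
    {B a : Matrix n n ℝ} {t : ℝ} (hL : HasEntrywiseDerivAt L (-(L t * B)) t)
    (hMdag : HasEntrywiseDerivAt Mdag (-(L t * a * (L t)ᵀ)) t) (hMdag_unit : IsUnit (Mdag t))
    (hH_unit : IsUnit ((L t)ᵀ * (Mdag t)⁻¹ * L t)) :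
    HasEntrywiseDerivAt (fun s => weightedLeftInverse (L s) (Mdag s)⁻¹)
      (B * weightedLeftInverse (L t) (Mdag t)⁻¹) t := by
  simp only [weightedLeftInverse]
  set M := (Mdag t)⁻¹ with hM_def
  set H := (L t)ᵀ * M * L t with hH_def
  have hdet : IsUnit H.det := (isUnit_iff_isUnit_det _).mp hH_unit
  have hM : HasEntrywiseDerivAt (fun s => (Mdag s)⁻¹) (M * L t * a * (L t)ᵀ * M) t :=
    (hMdag.inv hMdag_unit).congr_deriv (by
      simp only [← hM_def, Matrix.mul_neg, Matrix.neg_mul, neg_neg, Matrix.mul_assoc])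
  have hK : HasEntrywiseDerivAt (fun s => (L s)ᵀ * (Mdag s)⁻¹)
      (H * a * ((L t)ᵀ * M) - Bᵀ * ((L t)ᵀ * M)) t :=
    (hL.transpose.mul hM).congr_deriv (by
      simp only [hH_def, transpose_neg, transpose_mul, Matrix.neg_mul, Matrix.mul_assoc]
      abel)
  have hH : HasEntrywiseDerivAt (fun s => (L s)ᵀ * (Mdag s)⁻¹ * L s)
      (H * a * H - Bᵀ * H - H * B) t :=
    (hK.mul hL).congr_deriv (by
      simp only [hH_def, Matrix.sub_mul, Matrix.mul_neg, Matrix.mul_assoc]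
      abel)
  have hHinv : HasEntrywiseDerivAt (fun s => ((L s)ᵀ * (Mdag s)⁻¹ * L s)⁻¹)
      (B * H⁻¹ + H⁻¹ * Bᵀ - a) t :=
    (hH.inv hH_unit).congr_deriv (by
      simp only [← hM_def, ← hH_def]
      simp only [Matrix.mul_sub, Matrix.sub_mul, Matrix.mul_assoc,
        nonsing_inv_mul_cancel_left _ _ hdet, mul_nonsing_inv _ hdet, Matrix.mul_one]
      abel)
  have hP : HasEntrywiseDerivAt (fun s => ((L s)ᵀ * (Mdag s)⁻¹ * L s)⁻¹ * (L s)ᵀ)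
      (B * H⁻¹ * (L t)ᵀ - a * (L t)ᵀ) t :=
    (hHinv.mul hL.transpose).congr_deriv (by
      simp only [← hM_def, ← hH_def]
      simp only [transpose_neg, transpose_mul, Matrix.sub_mul, Matrix.add_mul, Matrix.mul_neg,
        Matrix.mul_assoc]
      abel)
  refine (hP.mul hM).congr_deriv ?_
  have hcancel : H⁻¹ * ((L t)ᵀ * (M * (L t * (a * ((L t)ᵀ * M))))) = a * ((L t)ᵀ * M) := by
    calc _ = H⁻¹ * (H * (a * ((L t)ᵀ * M))) := by simp only [hH_def, Matrix.mul_assoc]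
      _ = _ := nonsing_inv_mul_cancel_left _ _ hdet
  simp only [← hM_def, ← hH_def]
  simp only [Matrix.sub_mul, Matrix.mul_assoc, hcancel]
  abel

theorem backward_ode_for_nu_general {d m : ℕ} (a b : ℝ)
    (Btil atil : ℝ → Matrix (Fin d) (Fin d) ℝ) (βtil : ℝ → Fin d → ℝ)
    (Ltil : ℝ → Matrix (Fin m) (Fin d) ℝ)
    (hLtil : ∀ t ∈ Set.Ioo a b, ∀ i j,
      HasDerivAt (fun s => Ltil s i j) ((-(Ltil t * Btil t)) i j) t)
    (Mdag : ℝ → Matrix (Fin m) (Fin m) ℝ)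
    (hMdag : ∀ t ∈ Set.Ioo a b, ∀ i j,
      HasDerivAt (fun s => Mdag s i j) ((-(Ltil t * atil t * (Ltil t)ᵀ)) i j) t)
    (μ : ℝ → Fin m → ℝ)
    (hμ : ∀ t ∈ Set.Ioo a b, ∀ i,
      HasDerivAt (fun s => μ s i) ((-(Ltil t *ᵥ βtil t)) i) t)
    (hMinv : ∀ t ∈ Set.Ioo a b, IsUnit (Mdag t))
    (hHinv : ∀ t ∈ Set.Ioo a b, IsUnit ((Ltil t)ᵀ * (Mdag t)⁻¹ * Ltil t))
    (xobs : Fin m → ℝ)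
    (ν : ℝ → Fin d → ℝ)
    (hν : ∀ t, ν t =
      (((Ltil t)ᵀ * (Mdag t)⁻¹ * Ltil t)⁻¹ * (Ltil t)ᵀ * (Mdag t)⁻¹) *ᵥ
        (xobs - μ t)) :
    ∀ t ∈ Set.Ioo a b, ∀ i,
      HasDerivAt (fun s => ν s i) ((Btil t *ᵥ ν t + βtil t) i) t := by
  intro t ht
  have hG := hasEntrywiseDerivAt_weightedLeftInverse (hLtil t ht) (hMdag t ht) (hMinv t ht)
    (hHinv t ht)
  have hres : HasDerivAt (fun s => xobs - μ s) (Ltil t *ᵥ βtil t) t := by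
    simpa using (hasDerivAt_const t xobs).fun_sub (hasDerivAt_pi.2 (hμ t ht))
  have hν' : HasDerivAt ν (Btil t *ᵥ ν t + βtil t) t := by
    rw [show ν = fun s => weightedLeftInverse (Ltil s) (Mdag s)⁻¹ *ᵥ (xobs - μ s) from funext hν]
    refine (hG.mulVec hres).congr_deriv ?_
    rw [mulVec_mulVec (βtil t), weightedLeftInverse_mul_self (hHinv t ht), one_mulVec,
      ← mulVec_mulVec]
  exact hasDerivAt_pi.1 hν'

theorem backward_ode_for_nu {d m : ℕ} (a b : ℝ)
    (Btil atil : ℝ → Matrix (Fin d) (Fin d) ℝ) (βtil : ℝ → Fin d → ℝ)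
    (hB : ContinuousOn Btil (Set.Ioo a b)) (ha : ContinuousOn atil (Set.Ioo a b))
    (hβ : ContinuousOn βtil (Set.Ioo a b))
    (Ltil : ℝ → Matrix (Fin m) (Fin d) ℝ)
    (hLtil : ∀ t ∈ Set.Ioo a b, ∀ i j,
      HasDerivAt (fun s => Ltil s i j) ((-(Ltil t * Btil t)) i j) t)
    (Mdag : ℝ → Matrix (Fin m) (Fin m) ℝ)
    (hMdag : ∀ t ∈ Set.Ioo a b, ∀ i j,
      HasDerivAt (fun s => Mdag s i j) ((-(Ltil t * atil t * (Ltil t)ᵀ)) i j) t)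
    (μ : ℝ → Fin m → ℝ)
    (hμ : ∀ t ∈ Set.Ioo a b, ∀ i,
      HasDerivAt (fun s => μ s i) ((-(Ltil t *ᵥ βtil t)) i) t)
    (hMinv : ∀ t ∈ Set.Ioo a b, IsUnit (Mdag t))
    (hHinv : ∀ t ∈ Set.Ioo a b, IsUnit ((Ltil t)ᵀ * (Mdag t)⁻¹ * Ltil t))
    (xobs : Fin m → ℝ)
    (ν : ℝ → Fin d → ℝ)
    (hν : ∀ t, ν t =
      (((Ltil t)ᵀ * (Mdag t)⁻¹ * Ltil t)⁻¹ * (Ltil t)ᵀ * (Mdag t)⁻¹) *ᵥ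
        (xobs - μ t)) :
    ∀ t ∈ Set.Ioo a b, ∀ i,
      HasDerivAt (fun s => ν s i) ((Btil t *ᵥ ν t + βtil t) i) t :=
  backward_ode_for_nu_general a b Btil atil βtil Ltil hLtil Mdag hMdag μ hμ hMinv hHinv xobs ν hν
end
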